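/- arXiv:1512.05654 — 3 statements merged into one kernel-verified Lean document; each statement's English description precedes it below -/
import Mathlib

section
/- Let M be a von Neumann algebra on a complex Hilbert space H and let P : M → M be a normal linear contraction. Suppose Q : M → M is a bounded normal linear map with Q ∘ Q = Q, range Q = Fix P, and Q ∘ P = P ∘ Q. Then for every free ultrafilter β on ℕ and every x ∈ M, the Cesàro means Aₙ(x) converge to Q(x) in the weak operator topology along β; that is, the ultrafilter Cesàro projection P̃_β coincides with Q for every free ultrafilter β. -/
open Filter Topology

noncomputable section

variable {H : Type*} [NormedAddCommGroup H] [InnerProductSpace ℂ H] [CompleteSpace H]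

/-- Convergence in the weak operator topology of a family of operators along a filter. -/
def WOTTendsto {ι : Type*} (T : ι → (H →L[ℂ] H)) (l : Filter ι) (x : H →L[ℂ] H) : Prop :=
  Tendsto (fun i => ContinuousLinearMapWOT.ofCLM (T i)) l
    (𝓝 (ContinuousLinearMapWOT.ofCLM x))

/-- A map `P` is normal on a set `S` of operators if whenever a norm-bounded net in `S`
WOT-converges to an element of `S`, the image net WOT-converges to the image of the limit. -/
def IsNormalOn (S : Set (H →L[ℂ] H)) (P : (H →L[ℂ] H) → (H →L[ℂ] H)) : Prop :=
  ∀ {ι : Type*} (l : Filter ι) (T : ι → (H →L[ℂ] H)) (C : ℝ) (x : H →L[ℂ] H),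
    (∀ i, T i ∈ S) → (∀ i, ‖T i‖ ≤ C) → x ∈ S → WOTTendsto T l x →
      WOTTendsto (fun i => P (T i)) l (P x)

/-!
Along an ultrafilter the Cesàro means `Aₙ x`, being bounded by `‖x‖`, have a WOT-limit `z`, which
lies in `M` because a von Neumann algebra is WOT-closed. Since
`P (Aₙ x) - Aₙ x = (Pⁿ x - x) / n → 0` in norm, normality of `P` gives `P z = z`, so `z` lies in
`Fix = range Q` and `Q z = z`. On the other hand `Q ∘ P = P ∘ Q = Q` on `M`, so `Q (Aₙ x) = Q x`
for `n ≥ 1`, and normality of `Q` gives `Q z = Q x`.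
-/

open scoped InnerProductSpace ComplexConjugate

universe v w

section Cesaro

variable {𝕜 E F : Type*}

section Algebra

variable [DivisionRing 𝕜] [AddCommGroup E] [Module 𝕜 E]

def cesaroMean (L : E →ₗ[𝕜] E) (n : ℕ) (x : E) : E :=
  (n : 𝕜)⁻¹ • ∑ k ∈ Finset.range n, (L ^ k) x

variable {L : E →ₗ[𝕜] E}

lemma apply_cesaroMean_sub (n : ℕ) (x : E) :
    L (cesaroMean L n x) - cesaroMean L n x = (n : 𝕜)⁻¹ • ((L ^ n) x - x) := by
  have hshift : ∀ k, L ((L ^ k) x) = (L ^ (k + 1)) x := fun k => by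
    rw [pow_succ', Module.End.mul_apply]
  simp only [cesaroMean, map_smul, map_sum, ← smul_sub, ← Finset.sum_sub_distrib, hshift]
  rw [Finset.sum_range_sub (fun k => (L ^ k) x), pow_zero, Module.End.one_apply]

lemma apply_cesaroMean_of_comp_eq [CharZero 𝕜] [AddCommGroup F] [Module 𝕜 F]
    {Q : E →ₗ[𝕜] F} (hQ : Q ∘ₗ L = Q) {n : ℕ} (hn : n ≠ 0) (x : E) :
    Q (cesaroMean L n x) = Q x := by
  have hQpow : ∀ k, Q ((L ^ k) x) = Q x := by
    intro k
    induction k with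
    | zero => simp
    | succ k ih => rw [pow_succ', Module.End.mul_apply, ← LinearMap.comp_apply, hQ, ih]
  simp only [cesaroMean, map_smul, map_sum, hQpow, Finset.sum_const, Finset.card_range,
    ← Nat.cast_smul_eq_nsmul 𝕜, smul_smul]
  rw [inv_mul_cancel₀ (Nat.cast_ne_zero.mpr hn), one_smul]

lemma Submodule.coe_cesaroMean {S : Submodule 𝕜 E} {L : Module.End 𝕜 S} {f : E → E}
    (hLf : ∀ y : S, (L y : E) = f y) (n : ℕ) (y : S) :
    ((cesaroMean L n y : S) : E) = (n : 𝕜)⁻¹ • ∑ k ∈ Finset.range n, f^[k] y := by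
  have hsemi : Function.Semiconj Subtype.val L f := hLf
  simp only [cesaroMean, Submodule.coe_smul, Submodule.coe_sum, Module.End.pow_apply]
  exact congrArg _ (Finset.sum_congr rfl fun k _ => hsemi.iterate_right k y)

end Algebra

variable [RCLike 𝕜] [NormedAddCommGroup E] [NormedSpace 𝕜 E] {L : E →ₗ[𝕜] E}

lemma norm_pow_apply_le (hL : ∀ y, ‖L y‖ ≤ ‖y‖) (k : ℕ) (x : E) : ‖(L ^ k) x‖ ≤ ‖x‖ := by
  induction k with
  | zero => simp
  | succ k ih =>
    rw [pow_succ', Module.End.mul_apply]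
    exact (hL _).trans ih

lemma norm_cesaroMean_le (hL : ∀ y, ‖L y‖ ≤ ‖y‖) (n : ℕ) (x : E) : ‖cesaroMean L n x‖ ≤ ‖x‖ := by
  rcases Nat.eq_zero_or_pos n with rfl | hn
  · simp [cesaroMean]
  calc ‖cesaroMean L n x‖ ≤ (n : ℝ)⁻¹ * ∑ k ∈ Finset.range n, ‖(L ^ k) x‖ := by
        rw [cesaroMean, norm_smul, norm_inv, RCLike.norm_natCast]
        gcongr
        exact norm_sum_le _ _
    _ ≤ (n : ℝ)⁻¹ * ∑ _k ∈ Finset.range n, ‖x‖ := by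
        gcongr with k; exact norm_pow_apply_le hL k x
    _ = ‖x‖ := by simp [field]

lemma tendsto_apply_cesaroMean_sub (hL : ∀ y, ‖L y‖ ≤ ‖y‖) (x : E) :
    Tendsto (fun n => L (cesaroMean L n x) - cesaroMean L n x) atTop (𝓝 0) := by
  have hbound : ∀ n : ℕ, ‖L (cesaroMean L n x) - cesaroMean L n x‖ ≤ (n : ℝ)⁻¹ * (2 * ‖x‖) := by
    intro n
    rw [apply_cesaroMean_sub, norm_smul, norm_inv, RCLike.norm_natCast]
    gcongr
    calc ‖(L ^ n) x - x‖ ≤ ‖(L ^ n) x‖ + ‖x‖ := norm_sub_le _ _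
      _ ≤ 2 * ‖x‖ := by linarith [norm_pow_apply_le hL n x]
  refine squeeze_zero_norm hbound ?_
  simpa using tendsto_inv_atTop_zero.comp tendsto_natCast_atTop_atTop |>.mul_const (2 * ‖x‖)

end Cesaro

section

open ContinuousLinearMapWOT

variable {E : Type*} [NormedAddCommGroup E] [InnerProductSpace ℂ E]

lemma wotTendsto_unique {ι : Type*} {l : Filter ι} [l.NeBot] {T : ι → (E →L[ℂ] E)}
    {x y : E →L[ℂ] E} (hx : WOTTendsto T l x) (hy : WOTTendsto T l y) : x = y :=
  ofCLM_injective (tendsto_nhds_unique hx hy)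

lemma WOTTendsto.add_tendsto_zero {ι : Type*} {l : Filter ι} {T R : ι → (E →L[ℂ] E)}
    {x : E →L[ℂ] E} (hT : WOTTendsto T l x) (hR : Tendsto R l (𝓝 0)) :
    WOTTendsto (fun i => T i + R i) l x := by
  simpa [WOTTendsto] using hT.add ((continuous_ofCLM.tendsto 0).comp hR)

lemma centralizer_preimage_toCLM (S : Set (E →L[ℂ] E)) :
    Set.centralizer (toCLM ⁻¹' S) = toCLM ⁻¹' Set.centralizer S := by
  ext A
  simp only [Set.mem_centralizer_iff, Set.mem_preimage]
  constructor
  · intro h B hB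
    simpa using congrArg toCLM (h (ofCLM B) hB)
  · intro h B hB
    exact toCLM_injective (h _ hB)

lemma Ultrafilter.exists_tendsto_of_norm_le {X ι : Type*} [NormedAddCommGroup X] [ProperSpace X]
    (β : Ultrafilter ι) {g : ι → X} {C : ℝ} (hg : ∀ i, ‖g i‖ ≤ C) : ∃ a, Tendsto g β (𝓝 a) := by
  obtain ⟨a, -, ha⟩ := (isCompact_closedBall (0 : X) C).ultrafilter_le_nhds (β.map g)
    (le_principal_iff.mpr <| Ultrafilter.mem_map.mpr <|
      univ_mem' fun i => mem_closedBall_zero_iff.mpr (hg i))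
  exact ⟨a, ha⟩

lemma exists_wotTendsto_of_norm_le [CompleteSpace E] {ι : Type*} (β : Ultrafilter ι)
    {T : ι → (E →L[ℂ] E)} {C : ℝ} (hT : ∀ i, ‖T i‖ ≤ C) : ∃ x, WOTTendsto T β x := by
  have hbound : ∀ η ξ i, ‖⟪η, T i ξ⟫_ℂ‖ ≤ C * ‖η‖ * ‖ξ‖ := fun η ξ i =>
    calc ‖⟪η, T i ξ⟫_ℂ‖ ≤ ‖η‖ * (‖T i‖ * ‖ξ‖) :=
          (norm_inner_le_norm _ _).trans (by gcongr; exact (T i).le_opNorm ξ)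
      _ ≤ C * ‖η‖ * ‖ξ‖ := by
          rw [mul_left_comm, ← mul_assoc]; gcongr; exact hT i
  choose a ha using fun η ξ => β.exists_tendsto_of_norm_le (hbound η ξ)
  have huniq : ∀ {η ξ b}, Tendsto (fun i => ⟪η, T i ξ⟫_ℂ) β (𝓝 b) → a η ξ = b :=
    fun h => tendsto_nhds_unique (ha _ _) h
  let B₀ : E →ₗ⋆[ℂ] E →ₗ[ℂ] ℂ := LinearMap.mk₂'ₛₗ (starRingEnd ℂ) (RingHom.id ℂ) a
    (fun η η' ξ => huniq (by simpa only [inner_add_left] using (ha η ξ).add (ha η' ξ)))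
    (fun c η ξ => huniq (by
      simpa only [inner_smul_left, smul_eq_mul] using (ha η ξ).const_mul (conj c)))
    (fun η ξ ξ' => huniq (by simpa only [map_add, inner_add_right] using (ha η ξ).add (ha η ξ')))
    (fun c η ξ => huniq (by
      simpa only [map_smul, inner_smul_right, smul_eq_mul, RingHom.id_apply] using
        (ha η ξ).const_mul c))
  let B := B₀.mkContinuous₂ C fun η ξ => le_of_tendsto (ha η ξ).norm (.of_forall (hbound η ξ))
  -- `continuousLinearMapOfBilin B` is the `R` with `⟪R η, ξ⟫ = B η ξ`, so the limit is `R†`.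
  refine ⟨(InnerProductSpace.continuousLinearMapOfBilin B).adjoint,
    tendsto_iff_forall_inner_apply_tendsto.mpr fun ξ η => ?_⟩
  rw [ofCLM_apply, ContinuousLinearMap.adjoint_inner_right,
    InnerProductSpace.continuousLinearMapOfBilin_apply]
  exact ha η ξ

end

open ContinuousLinearMapWOT in
lemma VonNeumannAlgebra.isClosed_preimage_toCLM (M : VonNeumannAlgebra H) :
    IsClosed (toCLM ⁻¹' (M : Set (H →L[ℂ] H)) : Set (H →WOT[ℂ] H)) := by
  rw [← M.centralizer_centralizer, ← centralizer_preimage_toCLM, ← centralizer_preimage_toCLM]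
  exact Set.isClosed_centralizer _

open ContinuousLinearMapWOT in
lemma VonNeumannAlgebra.mem_of_wotTendsto (M : VonNeumannAlgebra H) {ι : Type*} {l : Filter ι}
    [l.NeBot] {T : ι → (H →L[ℂ] H)} {x : H →L[ℂ] H} (hT : ∀ i, T i ∈ M)
    (hx : WOTTendsto T l x) : x ∈ M :=
  M.isClosed_preimage_toCLM.mem_of_tendsto hx (Eventually.of_forall hT)

section

variable {E : Type*} [NormedAddCommGroup E] [InnerProductSpace ℂ E]
  {S : Set (E →L[ℂ] E)} {f : (E →L[ℂ] E) → (E →L[ℂ] E)} {ι : Type w} {l : Filter ι}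
  {T : ι → (E →L[ℂ] E)} {C : ℝ} {x : E →L[ℂ] E}

lemma IsNormalOn.wotTendsto (hf : IsNormalOn.{_, max w v} S f) (hTS : ∀ i, T i ∈ S)
    (hTC : ∀ i, ‖T i‖ ≤ C) (hx : x ∈ S) (hT : WOTTendsto T l x) :
    WOTTendsto (fun i => f (T i)) l (f x) :=
  -- `IsNormalOn` only quantifies over index types of one universe; transport the net along `ULift`.
  tendsto_map'_iff.mp <| hf (l.map ULift.up.{v}) (fun i => T i.down) C x (fun i => hTS i.down)
    (fun i => hTC i.down) hx (tendsto_map'_iff.mpr hT)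

lemma IsNormalOn.apply_eq_of_tendsto_apply_sub [l.NeBot] (hf : IsNormalOn.{_, max w v} S f)
    (hTS : ∀ i, T i ∈ S) (hTC : ∀ i, ‖T i‖ ≤ C) (hx : x ∈ S) (hT : WOTTendsto T l x)
    (hfT : Tendsto (fun i => f (T i) - T i) l (𝓝 0)) : f x = x :=
  wotTendsto_unique (hf.wotTendsto hTS hTC hx hT) (by simpa using hT.add_tendsto_zero hfT)

lemma IsNormalOn.apply_eq_of_eventually_apply_eq [l.NeBot] (hf : IsNormalOn.{_, max w v} S f)
    (hTS : ∀ i, T i ∈ S) (hTC : ∀ i, ‖T i‖ ≤ C) (hx : x ∈ S) (hT : WOTTendsto T l x)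
    {y : E →L[ℂ] E} (hfT : ∀ᶠ i in l, f (T i) = y) : f x = y :=
  wotTendsto_unique (hf.wotTendsto hTS hTC hx hT)
    (tendsto_const_nhds.congr' (hfT.mono fun _ h => congrArg _ h.symm))

end

theorem cesaro_projection_eq_of_normal_projection_general
    (M : VonNeumannAlgebra H)
    (P : (H →L[ℂ] H) → (H →L[ℂ] H))
    (hPmem : ∀ x ∈ M, P x ∈ M)
    (hPadd : ∀ x ∈ M, ∀ y ∈ M, P (x + y) = P x + P y)
    (hPsmul : ∀ (c : ℂ), ∀ x ∈ M, P (c • x) = c • P x)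
    (hPcontr : ∀ x ∈ M, ‖P x‖ ≤ ‖x‖)
    (hPnormal : IsNormalOn (M : Set (H →L[ℂ] H)) P)
    (Fix : Set (H →L[ℂ] H)) (hFix : Fix = {x | x ∈ M ∧ P x = x})
    (A : ℕ → (H →L[ℂ] H) → (H →L[ℂ] H))
    (hA : ∀ n x, A n x = (n : ℂ)⁻¹ • ∑ k ∈ Finset.range n, P^[k] x)
    (Q : (H →L[ℂ] H) → (H →L[ℂ] H))
    (hQadd : ∀ x ∈ M, ∀ y ∈ M, Q (x + y) = Q x + Q y)
    (hQsmul : ∀ (c : ℂ), ∀ x ∈ M, Q (c • x) = c • Q x)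
    (hQnormal : IsNormalOn (M : Set (H →L[ℂ] H)) Q)
    (hQidem : ∀ x ∈ M, Q (Q x) = Q x)
    (hQrange : {y | ∃ x ∈ M, Q x = y} = Fix)
    (hQP : ∀ x ∈ M, Q (P x) = P (Q x)) :
    ∀ (β : Ultrafilter ℕ), (β : Filter ℕ) ≤ Filter.cofinite →
      ∀ x ∈ M, WOTTendsto (fun n => A n x) (β : Filter ℕ) (Q x) := by
  intro β hβ x hx
  rw [Nat.cofinite_eq_atTop] at hβ
  let S := Subalgebra.toSubmodule M.toSubalgebra
  let L : Module.End ℂ S := (IsLinearMap.mk' (fun y : S => P y)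
    ⟨fun y z => hPadd y y.2 z z.2, fun c y => hPsmul c y y.2⟩).codRestrict S fun y => hPmem y y.2
  let Qₗ : S →ₗ[ℂ] (H →L[ℂ] H) := IsLinearMap.mk' (fun y : S => Q y)
    ⟨fun y z => hQadd y y.2 z z.2, fun c y => hQsmul c y y.2⟩
  have hLcontr : ∀ y : S, ‖L y‖ ≤ ‖y‖ := fun y => hPcontr y y.2
  have hA_eq : ∀ n, A n x = cesaroMean L n ⟨x, hx⟩ := fun n =>
    (hA n x).trans (Submodule.coe_cesaroMean (L := L) (f := P) (fun _ => rfl) n ⟨x, hx⟩).symm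
  have hAM : ∀ n, A n x ∈ M := fun n => hA_eq n ▸ (cesaroMean L n ⟨x, hx⟩).2
  have hAnorm : ∀ n, ‖A n x‖ ≤ ‖x‖ := fun n => hA_eq n ▸ norm_cesaroMean_le hLcontr n ⟨x, hx⟩
  obtain ⟨z, hz⟩ := exists_wotTendsto_of_norm_le β hAnorm
  have hzM : z ∈ M := M.mem_of_wotTendsto hAM hz
  have hPz : P z = z := hPnormal.apply_eq_of_tendsto_apply_sub hAM hAnorm hzM hz <| by
    simp only [hA_eq]
    exact ((continuous_subtype_val.tendsto 0).comp
      (tendsto_apply_cesaroMean_sub hLcontr ⟨x, hx⟩)).mono_left hβ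
  have hFix_sub : Fix ⊆ {y | Q y = y} := by
    rintro _ hy
    obtain ⟨w, hw, rfl⟩ := hQrange ▸ hy
    exact hQidem w hw
  have hQL : Qₗ ∘ₗ L = Qₗ := LinearMap.ext fun y => by
    have hQy : Q y ∈ Fix := hQrange ▸ ⟨y, y.2, rfl⟩
    exact (hQP y y.2).trans (hFix ▸ hQy).2
  have hQA : ∀ᶠ n in (β : Filter ℕ), Q (A n x) = Q x :=
    (eventually_ne_atTop 0).filter_mono hβ |>.mono fun n hn => by
      rw [hA_eq]; exact apply_cesaroMean_of_comp_eq hQL hn ⟨x, hx⟩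
  have hQz : Q z = z := hFix_sub (hFix ▸ ⟨hzM, hPz⟩)
  rwa [← hQnormal.apply_eq_of_eventually_apply_eq hAM hAnorm hzM hz hQA, hQz]

/-- If a normal contraction `P` on a von Neumann algebra admits a bounded normal projection `Q`
onto its fixed point space commuting with `P`, then the ultrafilter Cesàro projection coincides
with `Q` for every free ultrafilter. -/
theorem cesaro_projection_eq_of_normal_projection
    (M : VonNeumannAlgebra H)
    (P : (H →L[ℂ] H) → (H →L[ℂ] H))
    (hPmem : ∀ x ∈ M, P x ∈ M)
    (hPadd : ∀ x ∈ M, ∀ y ∈ M, P (x + y) = P x + P y)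
    (hPsmul : ∀ (c : ℂ), ∀ x ∈ M, P (c • x) = c • P x)
    (hPcontr : ∀ x ∈ M, ‖P x‖ ≤ ‖x‖)
    (hPnormal : IsNormalOn (M : Set (H →L[ℂ] H)) P)
    (Fix : Set (H →L[ℂ] H)) (hFix : Fix = {x | x ∈ M ∧ P x = x})
    (A : ℕ → (H →L[ℂ] H) → (H →L[ℂ] H))
    (hA : ∀ n x, A n x = (n : ℂ)⁻¹ • ∑ k ∈ Finset.range n, P^[k] x)
    (Q : (H →L[ℂ] H) → (H →L[ℂ] H))
    (hQmem : ∀ x ∈ M, Q x ∈ M)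
    (hQadd : ∀ x ∈ M, ∀ y ∈ M, Q (x + y) = Q x + Q y)
    (hQsmul : ∀ (c : ℂ), ∀ x ∈ M, Q (c • x) = c • Q x)
    (hQbdd : ∃ C : ℝ, ∀ x ∈ M, ‖Q x‖ ≤ C * ‖x‖)
    (hQnormal : IsNormalOn (M : Set (H →L[ℂ] H)) Q)
    (hQidem : ∀ x ∈ M, Q (Q x) = Q x)
    (hQrange : {y | ∃ x ∈ M, Q x = y} = Fix)
    (hQP : ∀ x ∈ M, Q (P x) = P (Q x)) :
    ∀ (β : Ultrafilter ℕ), (β : Filter ℕ) ≤ Filter.cofinite →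
      ∀ x ∈ M, WOTTendsto (fun n => A n x) (β : Filter ℕ) (Q x) :=
  cesaro_projection_eq_of_normal_projection_general M P hPmem hPadd hPsmul hPcontr hPnormal Fix hFix
    A hA Q hQadd hQsmul hQnormal hQidem hQrange hQP

end
end

section
/- Let G be a locally compact Hausdorff topological group with a left Haar measure, let H and K be separable complex Hilbert spaces, let X ⊆ B(H;K) be a norm-closed linear subspace closed under the ternary product (a,b,c) ↦ a b* c, and let α : G → (X → X) be a group homomorphism such that each α_g is a surjective linear isometry satisfying α_g(a b* c) = α_g(a)·α_g(b)*·α_g(c), and for each x ∈ X the map g ↦ α_g(x) is WOT-continuous. Then for every x ∈ X there exists a unique bounded linear operator π(x) : L²(G;H) → L²(G;K) such that for every ζ ∈ L²(G;H), (π(x)ζ)(g) = α_{g⁻¹}(x)(ζ(g)) for almost every g ∈ G. Moreover x ↦ π(x) is linear, ‖π(x)‖ = ‖x‖ for every x ∈ X, and π(x y* z) = π(x)·π(y)*·π(z) for all x, y, z ∈ X; that is, π is an isometric (faithful) TRO representation of X on the pair (L²(G;H), L²(G;K)). -/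
open Filter Topology MeasureTheory ContinuousLinearMap

noncomputable section

/-!
Each `α_{g⁻¹}(x)` has norm `‖x‖`, and `g ↦ α_{g⁻¹}(x)` is weakly continuous, hence (Pettis,
using separability) pointwise strongly measurable. So applying it pointwise is a bounded
multiplication operator on `L²` of norm at most `‖x‖`, determined by its a.e. formula.
Linearity and the TRO identity hold pointwise, once one knows that the adjoint of a
multiplication operator is multiplication by the pointwise adjoints. For `‖x‖ ≤ ‖π x‖`, test
`π x` against `1_S v` and `1_S (x v)` for a small open neighbourhood `S` of `1`: by weak
continuity at `1`, `⟪x v, α_{g⁻¹}(x) v⟫ ≈ ‖x v‖²` on `S`, whence `‖x v‖ ≤ ‖π x‖ ‖v‖`.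
-/

open scoped InnerProductSpace ENNReal ComplexConjugate

section WeakMeasurability

variable {𝕜 K β : Type*} [RCLike 𝕜] [NormedAddCommGroup K] [InnerProductSpace 𝕜 K]

theorem norm_eq_iSup_norm_inner_div_norm {D : Set K} (hD : Dense D) [Nonempty D] (v : K) :
    ‖v‖ = ⨆ w : D, ‖⟪(w : K), v⟫_𝕜‖ / ‖(w : K)‖ := by
  have hle : ∀ w : K, ‖⟪w, v⟫_𝕜‖ / ‖w‖ ≤ ‖v‖ := fun w =>
    div_le_of_le_mul₀ (norm_nonneg _) (norm_nonneg _)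
      ((norm_inner_le_norm w v).trans_eq (mul_comm _ _))
  refine le_antisymm ?_ (ciSup_le fun w => hle w)
  rcases eq_or_ne v 0 with rfl | hv
  · simp
  have hcont : ContinuousAt (fun w : K => ‖⟪w, v⟫_𝕜‖ / ‖w‖) v :=
    ((continuous_id.inner continuous_const).norm.continuousAt).div continuous_norm.continuousAt
      (norm_ne_zero_iff.2 hv)
  have hval : ‖⟪v, v⟫_𝕜‖ / ‖v‖ = ‖v‖ := by
    rw [inner_self_eq_norm_sq_to_K, norm_pow, RCLike.norm_ofReal, abs_norm, sq,
      mul_div_assoc, div_self (norm_ne_zero_iff.2 hv), mul_one]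
  refine le_of_forall_lt fun c hc => ?_
  obtain ⟨w, hcw, hwD⟩ := mem_closure_iff_nhds.1 (hD v) _
    (hcont.eventually (lt_mem_nhds (hval.symm ▸ hc)))
  exact hcw.trans_le (le_ciSup ⟨‖v‖, by rintro _ ⟨w, rfl⟩; exact hle w⟩ ⟨w, hwD⟩)

theorem measurable_of_forall_measurable_dist {α : Type*} [MeasurableSpace β] [PseudoMetricSpace α]
    [SecondCountableTopology α] [MeasurableSpace α] [BorelSpace α] {f : β → α}
    (h : ∀ c, Measurable fun b => dist (f b) c) : Measurable f := by
  refine measurable_of_isOpen fun U hU => ?_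
  obtain ⟨T, hTc, hTballs, hTU⟩ := TopologicalSpace.isOpen_sUnion_countable
    {B | ∃ c r, B = Metric.ball c r ∧ B ⊆ U} (by rintro _ ⟨c, r, rfl, -⟩; exact Metric.isOpen_ball)
  have hU : U = ⋃₀ T := by
    refine hTU.symm ▸ subset_antisymm (fun x hx => ?_) (Set.sUnion_subset fun B ⟨_, _, _, hB⟩ => hB)
    obtain ⟨r, hr, hrU⟩ := Metric.isOpen_iff.1 hU x hx
    exact ⟨_, ⟨x, r, rfl, hrU⟩, Metric.mem_ball_self hr⟩
  rw [hU, Set.preimage_sUnion]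
  refine MeasurableSet.biUnion hTc fun B hB => ?_
  obtain ⟨c, r, rfl, -⟩ := hTballs hB
  exact measurableSet_lt (h c) (measurable_const (a := r))

theorem stronglyMeasurable_of_forall_measurable_inner [TopologicalSpace.SeparableSpace K]
    [MeasurableSpace β] {f : β → K} (h : ∀ w, Measurable fun b => ⟪w, f b⟫_𝕜) :
    StronglyMeasurable f := by
  borelize K
  refine (measurable_of_forall_measurable_dist fun c => ?_).stronglyMeasurable
  obtain ⟨D, hDc, hD⟩ := TopologicalSpace.exists_countable_dense K
  have := hDc.to_subtype
  have := hD.nonempty.to_subtype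
  have hdist : (fun b => dist (f b) c) =
      fun b => ⨆ w : D, ‖⟪(w : K), f b⟫_𝕜 - ⟪(w : K), c⟫_𝕜‖ / ‖(w : K)‖ := by
    ext b
    simp only [dist_eq_norm, norm_eq_iSup_norm_inner_div_norm (𝕜 := 𝕜) hD (f b - c),
      inner_sub_right]
  rw [hdist]
  exact Measurable.iSup fun w => (((h w).sub measurable_const).norm).div_const _

end WeakMeasurability

theorem MeasureTheory.StronglyMeasurable.clm_apply {𝕜 β E F : Type*} [NontriviallyNormedField 𝕜]
    [MeasurableSpace β] [NormedAddCommGroup E] [NormedSpace 𝕜 E]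
    [TopologicalSpace.SeparableSpace E] [NormedAddCommGroup F] [NormedSpace 𝕜 F]
    {A : β → E →L[𝕜] F} {f : β → E} (hf : StronglyMeasurable f)
    (hA : ∀ v, StronglyMeasurable fun b => A b v) : StronglyMeasurable fun b => A b (f b) := by
  borelize E
  exact (stronglyMeasurable_uncurry_of_continuous_of_stronglyMeasurable
    (u := fun v b => A b v) (fun b => (A b).continuous) hA).comp_measurable
      (hf.measurable.prodMk measurable_id)

section MultiplicationOperator

variable {𝕜 G E F : Type*} [RCLike 𝕜] [MeasurableSpace G] {μ : Measure G} {p : ℝ≥0∞} [Fact (1 ≤ p)]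
  [NormedAddCommGroup E] [NormedSpace 𝕜 E] [NormedAddCommGroup F] [NormedSpace 𝕜 F]

def IsMultiplicationOperator (A : G → E →L[𝕜] F) (T : Lp E p μ →L[𝕜] Lp F p μ) : Prop :=
  ∀ ζ : Lp E p μ, ∀ᵐ g ∂μ, (T ζ : G → F) g = A g ((ζ : G → E) g)

namespace IsMultiplicationOperator

variable {A B : G → E →L[𝕜] F} {T S : Lp E p μ →L[𝕜] Lp F p μ}

theorem unique (hT : IsMultiplicationOperator A T) (hS : IsMultiplicationOperator A S) : T = S := by
  ext ζ
  filter_upwards [hT ζ, hS ζ] with g hTg hSg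
  rw [hTg, hSg]

theorem add (hT : IsMultiplicationOperator A T) (hS : IsMultiplicationOperator B S) :
    IsMultiplicationOperator (A + B) (T + S) := fun ζ => by
  filter_upwards [Lp.coeFn_add (T ζ) (S ζ), hT ζ, hS ζ] with g hg hTg hSg
  rw [add_apply, hg, Pi.add_apply, hTg, hSg, Pi.add_apply, add_apply]

theorem smul (hT : IsMultiplicationOperator A T) (c : 𝕜) :
    IsMultiplicationOperator (c • A) (c • T) := fun ζ => by
  filter_upwards [Lp.coeFn_smul c (T ζ), hT ζ] with g hg hTg
  rw [smul_apply, hg, Pi.smul_apply, hTg, Pi.smul_apply, smul_apply]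

theorem comp {F' : Type*} [NormedAddCommGroup F'] [NormedSpace 𝕜 F'] {A' : G → F →L[𝕜] F'}
    {T' : Lp F p μ →L[𝕜] Lp F' p μ} (hT' : IsMultiplicationOperator A' T')
    (hT : IsMultiplicationOperator A T) :
    IsMultiplicationOperator (fun g => A' g ∘L A g) (T' ∘L T) := fun ζ => by
  filter_upwards [hT' (T ζ), hT ζ] with g hT'g hTg
  rw [comp_apply, hT'g, hTg, comp_apply]

end IsMultiplicationOperator

theorem exists_isMultiplicationOperator [TopologicalSpace.SeparableSpace E] {A : G → E →L[𝕜] F}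
    (hA : ∀ v, StronglyMeasurable fun g => A g v) {C : ℝ} (hC : 0 ≤ C) (hAC : ∀ g, ‖A g‖ ≤ C) :
    ∃ T : Lp E p μ →L[𝕜] Lp F p μ, ‖T‖ ≤ C ∧ IsMultiplicationOperator A T := by
  have hbound (ζ : Lp E p μ) : ∀ᵐ g ∂μ, ‖A g ((ζ : G → E) g)‖ ≤ C * ‖(ζ : G → E) g‖ :=
    Eventually.of_forall fun g => (A g).le_of_opNorm_le (hAC g) _
  have hmem (ζ : Lp E p μ) : MemLp (fun g => A g ((ζ : G → E) g)) p μ := by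
    obtain ⟨f, hf, hζf⟩ := Lp.aestronglyMeasurable ζ
    refine (Lp.memLp ζ).of_le_mul ⟨_, hf.clm_apply hA, ?_⟩ (hbound ζ)
    filter_upwards [hζf] with g hg
    rw [hg]
  let L : Lp E p μ →ₗ[𝕜] Lp F p μ :=
    { toFun := fun ζ => (hmem ζ).toLp
      map_add' := fun ζ η => by
        ext1
        filter_upwards [(hmem (ζ + η)).coeFn_toLp, Lp.coeFn_add (hmem ζ).toLp (hmem η).toLp,
          (hmem ζ).coeFn_toLp, (hmem η).coeFn_toLp, Lp.coeFn_add ζ η] with g h h' hζ hη hζη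
        rw [h, h', Pi.add_apply, hζ, hη, hζη, Pi.add_apply, map_add]
      map_smul' := fun c ζ => by
        ext1
        filter_upwards [(hmem (c • ζ)).coeFn_toLp, Lp.coeFn_smul c (hmem ζ).toLp,
          (hmem ζ).coeFn_toLp, Lp.coeFn_smul c ζ] with g h h' hζ hcζ
        rw [h, RingHom.id_apply, h', Pi.smul_apply, hζ, hcζ, Pi.smul_apply, map_smul] }
  refine ⟨L.mkContinuous C fun ζ => ?_, L.mkContinuous_norm_le hC _, fun ζ => (hmem ζ).coeFn_toLp⟩
  refine Lp.norm_le_mul_norm_of_ae_le_mul ?_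
  filter_upwards [(hmem ζ).coeFn_toLp, hbound ζ] with g hg hζ
  exact hg ▸ hζ

end MultiplicationOperator

theorem norm_indicatorConstLp_two {G E : Type*} [MeasurableSpace G] {μ : Measure G}
    [NormedAddCommGroup E] {s : Set G} (hs : MeasurableSet s) (hμs : μ s ≠ ∞) (c : E) :
    ‖indicatorConstLp 2 hs hμs c‖ = ‖c‖ * √(μ.real s) := by
  rw [norm_indicatorConstLp two_ne_zero ENNReal.ofNat_ne_top, Real.sqrt_eq_rpow]
  norm_num

namespace IsMultiplicationOperator

variable {𝕜 G E F : Type*} [RCLike 𝕜] [MeasurableSpace G] {μ : Measure G}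
  [NormedAddCommGroup E] [InnerProductSpace 𝕜 E] [NormedAddCommGroup F] [InnerProductSpace 𝕜 F]
  {A : G → E →L[𝕜] F} {T : Lp E 2 μ →L[𝕜] Lp F 2 μ}

theorem adjoint_eq [CompleteSpace E] [CompleteSpace F] {S : Lp F 2 μ →L[𝕜] Lp E 2 μ}
    (hT : IsMultiplicationOperator A T) (hS : IsMultiplicationOperator (fun g => adjoint (A g)) S) :
    adjoint T = S := by
  refine ((eq_adjoint_iff S T).2 fun η ζ => ?_).symm
  rw [L2.inner_def, L2.inner_def]
  refine integral_congr_ae ?_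
  filter_upwards [hS η, hT ζ] with g hSg hTg
  rw [hSg, hTg, adjoint_inner_left]

theorem norm_apply_le [TopologicalSpace G] [OpensMeasurableSpace G] [μ.IsOpenPosMeasure]
    [IsLocallyFiniteMeasure μ] (hT : IsMultiplicationOperator A T) {g₀ : G}
    (hA : ∀ v w, ContinuousAt (fun g => ⟪w, A g v⟫_𝕜) g₀) (v : E) :
    ‖A g₀ v‖ ≤ ‖T‖ * ‖v‖ := by
  set a := A g₀ v
  suffices h : ∀ δ > 0, ‖a‖ * ‖a‖ ≤ ‖a‖ * (‖T‖ * ‖v‖) + δ by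
    have hb : 0 ≤ ‖T‖ * ‖v‖ := by positivity
    by_contra! hlt
    have := le_of_forall_pos_le_add h
    nlinarith [mul_pos (sub_pos.2 hlt) (hb.trans_lt hlt)]
  intro δ hδ
  obtain ⟨S, hg₀S, hSo, hSfin, hSδ⟩ : ∃ S, g₀ ∈ S ∧ IsOpen S ∧ μ S < ∞ ∧
      ∀ g ∈ S, ‖⟪a, A g v⟫_𝕜 - ⟪a, a⟫_𝕜‖ < δ := by
    obtain ⟨U, hg₀U, hUo, hUfin⟩ := μ.exists_isOpen_measure_lt_top g₀
    obtain ⟨V, hVδ, hVo, hg₀V⟩ :=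
      mem_nhds_iff.1 ((hA v a).eventually (Metric.ball_mem_nhds _ hδ))
    exact ⟨U ∩ V, ⟨hg₀U, hg₀V⟩, hUo.inter hVo, (measure_mono Set.inter_subset_left).trans_lt hUfin,
      fun g hg => by simpa only [Set.mem_ofPred_eq, Metric.mem_ball, dist_eq_norm] using hVδ hg.2⟩
  have hSm := hSo.measurableSet
  have hSpos : 0 < μ.real S := ENNReal.toReal_pos (hSo.measure_ne_zero μ ⟨g₀, hg₀S⟩) hSfin.ne
  set ζ := indicatorConstLp 2 hSm hSfin.ne v
  set ξ := indicatorConstLp 2 hSm hSfin.ne a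
  have hdefect : ‖⟪ξ, T ζ - ξ⟫_𝕜‖ ≤ δ * μ.real S := by
    rw [L2.inner_indicatorConstLp_eq_setIntegral_inner]
    refine norm_setIntegral_le_of_norm_le_const_ae' hSfin ?_
    filter_upwards [Lp.coeFn_sub (T ζ) ξ, hT ζ, indicatorConstLp_coeFn (c := v) (p := 2),
      indicatorConstLp_coeFn (c := a) (p := 2)] with g hsub hTg hζg hξg hgS
    rw [hsub, Pi.sub_apply, hTg, hζg, hξg, Set.indicator_of_mem hgS, Set.indicator_of_mem hgS,
      inner_sub_right]
    exact (hSδ g hgS).le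
  have key : ‖ξ‖ * ‖ξ‖ ≤ ‖ξ‖ * (‖T‖ * ‖ζ‖) + δ * μ.real S := calc
    ‖ξ‖ * ‖ξ‖ ≤ ‖⟪ξ, ξ⟫_𝕜‖ := (inner_self_eq_norm_mul_norm ξ).symm.trans_le (RCLike.re_le_norm _)
    _ = ‖⟪ξ, T ζ⟫_𝕜 - ⟪ξ, T ζ - ξ⟫_𝕜‖ := by rw [inner_sub_right, sub_sub_cancel]
    _ ≤ ‖⟪ξ, T ζ⟫_𝕜‖ + ‖⟪ξ, T ζ - ξ⟫_𝕜‖ := norm_sub_le _ _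
    _ ≤ ‖ξ‖ * (‖T‖ * ‖ζ‖) + δ * μ.real S := by
      gcongr
      exact (norm_inner_le_norm _ _).trans (by gcongr; exact T.le_opNorm ζ)
  rw [norm_indicatorConstLp_two, norm_indicatorConstLp_two] at key
  have hsq : √(μ.real S) * √(μ.real S) = μ.real S := Real.mul_self_sqrt hSpos.le
  refine le_of_mul_le_mul_right ?_ hSpos
  linear_combination key - (‖a‖ * ‖a‖ - ‖a‖ * (‖T‖ * ‖v‖)) * hsq

theorem norm_le_opNorm [TopologicalSpace G] [OpensMeasurableSpace G] [μ.IsOpenPosMeasure]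
    [IsLocallyFiniteMeasure μ] (hT : IsMultiplicationOperator A T) {g₀ : G}
    (hA : ∀ v w, ContinuousAt (fun g => ⟪w, A g v⟫_𝕜) g₀) : ‖A g₀‖ ≤ ‖T‖ :=
  opNorm_le_bound _ (norm_nonneg _) (hT.norm_apply_le hA)

end IsMultiplicationOperator

section WeaklyContinuousSymbol

variable {𝕜 G E F : Type*} [RCLike 𝕜] [TopologicalSpace G] [NormedAddCommGroup E]
  [InnerProductSpace 𝕜 E] [NormedAddCommGroup F] [InnerProductSpace 𝕜 F] {A : G → E →L[𝕜] F}

theorem continuous_inner_adjoint_apply [CompleteSpace E] [CompleteSpace F]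
    (hA : ∀ v w, Continuous fun g => ⟪w, A g v⟫_𝕜) (w : F) (v : E) :
    Continuous fun g => ⟪v, adjoint (A g) w⟫_𝕜 := by
  have hconj (g : G) : ⟪v, adjoint (A g) w⟫_𝕜 = conj ⟪w, A g v⟫_𝕜 := by
    rw [adjoint_inner_right, inner_conj_symm]
  simp only [hconj]
  exact RCLike.continuous_conj.comp (hA v w)

theorem exists_isMultiplicationOperator_of_continuous_inner [MeasurableSpace G]
    [OpensMeasurableSpace G] {μ : Measure G} {p : ℝ≥0∞} [Fact (1 ≤ p)]
    [TopologicalSpace.SeparableSpace E] [TopologicalSpace.SeparableSpace F]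
    (hA : ∀ v w, Continuous fun g => ⟪w, A g v⟫_𝕜) {C : ℝ} (hC : 0 ≤ C) (hAC : ∀ g, ‖A g‖ ≤ C) :
    ∃ T : Lp E p μ →L[𝕜] Lp F p μ, ‖T‖ ≤ C ∧ IsMultiplicationOperator A T :=
  exists_isMultiplicationOperator
    (fun v => stronglyMeasurable_of_forall_measurable_inner fun w => (hA v w).measurable) hC hAC

end WeaklyContinuousSymbol

theorem integrated_representation_of_TRO_action_general
    {G : Type*} [Group G] [TopologicalSpace G] [IsTopologicalGroup G]
    [LocallyCompactSpace G] [MeasurableSpace G] [BorelSpace G]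
    (μ : MeasureTheory.Measure G) [μ.IsHaarMeasure]
    {H K : Type*}
    [NormedAddCommGroup H] [InnerProductSpace ℂ H] [CompleteSpace H]
    [TopologicalSpace.SeparableSpace H]
    [NormedAddCommGroup K] [InnerProductSpace ℂ K] [CompleteSpace K]
    [TopologicalSpace.SeparableSpace K]
    (X : Set (H →L[ℂ] K))
    (hXadd : ∀ a ∈ X, ∀ b ∈ X, a + b ∈ X)
    (hXsmul : ∀ (c : ℂ), ∀ a ∈ X, c • a ∈ X)
    (hXtro : ∀ a ∈ X, ∀ b ∈ X, ∀ c ∈ X, a ∘L ((ContinuousLinearMap.adjoint b) ∘L c) ∈ X)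
    (α : G → (H →L[ℂ] K) → (H →L[ℂ] K))
    (hadd : ∀ g : G, ∀ x ∈ X, ∀ y ∈ X, α g (x + y) = α g x + α g y)
    (hsmul : ∀ g : G, ∀ (c : ℂ), ∀ x ∈ X, α g (c • x) = c • α g x)
    (hiso : ∀ g : G, ∀ x ∈ X, ‖α g x‖ = ‖x‖)
    (htro : ∀ g : G, ∀ a ∈ X, ∀ b ∈ X, ∀ c ∈ X,
      α g (a ∘L ((ContinuousLinearMap.adjoint b) ∘L c)) =
        (α g a) ∘L ((ContinuousLinearMap.adjoint (α g b)) ∘L (α g c)))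
    (hone : ∀ x ∈ X, α (1 : G) x = x)
    (hcont : ∀ x ∈ X, Continuous fun g : G => ContinuousLinearMapWOT.ofCLM (α g x)) :
    -- for each x ∈ X there is a unique bounded operator acting pointwise by α_{g⁻¹}(x)
    (∀ x ∈ X, ∃! T : Lp H 2 μ →L[ℂ] Lp K 2 μ,
      ∀ ζ : Lp H 2 μ, ∀ᵐ g ∂μ, (T ζ : G → K) g = α g⁻¹ x ((ζ : G → H) g)) ∧
    -- and any map π assigning to each x ∈ X such an operator is linear, isometric and a
    -- TRO morphism
    (∀ π : (H →L[ℂ] K) → (Lp H 2 μ →L[ℂ] Lp K 2 μ),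
      (∀ x ∈ X, ∀ ζ : Lp H 2 μ, ∀ᵐ g ∂μ, (π x ζ : G → K) g = α g⁻¹ x ((ζ : G → H) g)) →
      (∀ x ∈ X, ∀ y ∈ X, π (x + y) = π x + π y) ∧
      (∀ (c : ℂ), ∀ x ∈ X, π (c • x) = c • π x) ∧
      (∀ x ∈ X, ‖π x‖ = ‖x‖) ∧
      (∀ x ∈ X, ∀ y ∈ X, ∀ z ∈ X,
        π (x ∘L ((ContinuousLinearMap.adjoint y) ∘L z)) =
          (π x) ∘L ((ContinuousLinearMap.adjoint (π y)) ∘L (π z)))) := by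
  have hweak (x) (hx : x ∈ X) (v : H) (w : K) : Continuous fun g : G => ⟪w, α g⁻¹ x v⟫_ℂ :=
    (ContinuousLinearMapWOT.continuous_dual_apply v (innerSL ℂ w)).comp
      ((hcont x hx).comp continuous_inv)
  have hex (x) (hx : x ∈ X) : ∃ T : Lp H 2 μ →L[ℂ] Lp K 2 μ,
      ‖T‖ ≤ ‖x‖ ∧ IsMultiplicationOperator (fun g => α g⁻¹ x) T :=
    exists_isMultiplicationOperator_of_continuous_inner (hweak x hx) (norm_nonneg x)
      fun g => (hiso g⁻¹ x hx).le
  refine ⟨fun x hx => ?_, fun π hπ' => ?_⟩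
  · obtain ⟨T, -, hT⟩ := hex x hx
    exact ⟨T, hT, fun T' hT' => IsMultiplicationOperator.unique (p := 2) hT' hT⟩
  have hπ (x) (hx : x ∈ X) : IsMultiplicationOperator (fun g => α g⁻¹ x) (π x) := hπ' x hx
  have hadj (y) (hy : y ∈ X) :
      IsMultiplicationOperator (fun g => adjoint (α g⁻¹ y)) (adjoint (π y)) := by
    obtain ⟨S, -, hS⟩ := exists_isMultiplicationOperator_of_continuous_inner (p := 2)
      (continuous_inner_adjoint_apply (hweak y hy)) (norm_nonneg y)
      fun g => ((adjoint.norm_map _).trans (hiso g⁻¹ y hy)).le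
    rwa [(hπ y hy).adjoint_eq hS]
  refine ⟨fun x hx y hy => ?_, fun c x hx => ?_, fun x hx => ?_, fun x hx y hy z hz => ?_⟩
  · refine (hπ _ (hXadd x hx y hy)).unique ?_
    convert (hπ x hx).add (hπ y hy) using 1
    exact funext fun g => hadd g⁻¹ x hx y hy
  · refine (hπ _ (hXsmul c x hx)).unique ?_
    convert (hπ x hx).smul c using 1
    exact funext fun g => hsmul g⁻¹ c x hx
  · obtain ⟨T, hTx, hT⟩ := hex x hx
    refine le_antisymm ((hπ x hx).unique hT ▸ hTx) ?_
    simpa [hone x hx] using (hπ x hx).norm_le_opNorm (g₀ := 1)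
      fun v w => (hweak x hx v w).continuousAt
  · refine (hπ _ (hXtro x hx y hy z hz)).unique ?_
    convert (hπ x hx).comp ((hadj y hy).comp (hπ z hz)) using 1
    exact funext fun g => htro g⁻¹ x hx y hy z hz

/-- The regular representation of a TRO action: a continuous WOT-continuous action of a locally
compact group on a TRO `X ⊆ B(H;K)` integrates to a faithful TRO representation on the
Bochner spaces `L²(G;H)` and `L²(G;K)`. -/
theorem integrated_representation_of_TRO_action
    {G : Type*} [Group G] [TopologicalSpace G] [IsTopologicalGroup G]
    [LocallyCompactSpace G] [T2Space G] [MeasurableSpace G] [BorelSpace G]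
    (μ : MeasureTheory.Measure G) [μ.IsHaarMeasure]
    {H K : Type*}
    [NormedAddCommGroup H] [InnerProductSpace ℂ H] [CompleteSpace H]
    [TopologicalSpace.SeparableSpace H]
    [NormedAddCommGroup K] [InnerProductSpace ℂ K] [CompleteSpace K]
    [TopologicalSpace.SeparableSpace K]
    (X : Set (H →L[ℂ] K))
    (hX0 : (0 : H →L[ℂ] K) ∈ X)
    (hXadd : ∀ a ∈ X, ∀ b ∈ X, a + b ∈ X)
    (hXsmul : ∀ (c : ℂ), ∀ a ∈ X, c • a ∈ X)
    (hXclosed : IsClosed X)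
    (hXtro : ∀ a ∈ X, ∀ b ∈ X, ∀ c ∈ X, a ∘L ((ContinuousLinearMap.adjoint b) ∘L c) ∈ X)
    (α : G → (H →L[ℂ] K) → (H →L[ℂ] K))
    (hbij : ∀ g : G, Set.BijOn (α g) X X)
    (hadd : ∀ g : G, ∀ x ∈ X, ∀ y ∈ X, α g (x + y) = α g x + α g y)
    (hsmul : ∀ g : G, ∀ (c : ℂ), ∀ x ∈ X, α g (c • x) = c • α g x)
    (hiso : ∀ g : G, ∀ x ∈ X, ‖α g x‖ = ‖x‖)
    (htro : ∀ g : G, ∀ a ∈ X, ∀ b ∈ X, ∀ c ∈ X,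
      α g (a ∘L ((ContinuousLinearMap.adjoint b) ∘L c)) =
        (α g a) ∘L ((ContinuousLinearMap.adjoint (α g b)) ∘L (α g c)))
    (hhom : ∀ g h : G, ∀ x ∈ X, α (g * h) x = α g (α h x))
    (hone : ∀ x ∈ X, α (1 : G) x = x)
    (hcont : ∀ x ∈ X, Continuous fun g : G => ContinuousLinearMapWOT.ofCLM (α g x)) :
    -- for each x ∈ X there is a unique bounded operator acting pointwise by α_{g⁻¹}(x)
    (∀ x ∈ X, ∃! T : Lp H 2 μ →L[ℂ] Lp K 2 μ,
      ∀ ζ : Lp H 2 μ, ∀ᵐ g ∂μ, (T ζ : G → K) g = α g⁻¹ x ((ζ : G → H) g)) ∧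
    -- and any map π assigning to each x ∈ X such an operator is linear, isometric and a
    -- TRO morphism
    (∀ π : (H →L[ℂ] K) → (Lp H 2 μ →L[ℂ] Lp K 2 μ),
      (∀ x ∈ X, ∀ ζ : Lp H 2 μ, ∀ᵐ g ∂μ, (π x ζ : G → K) g = α g⁻¹ x ((ζ : G → H) g)) →
      (∀ x ∈ X, ∀ y ∈ X, π (x + y) = π x + π y) ∧
      (∀ (c : ℂ), ∀ x ∈ X, π (c • x) = c • π x) ∧
      (∀ x ∈ X, ‖π x‖ = ‖x‖) ∧
      (∀ x ∈ X, ∀ y ∈ X, ∀ z ∈ X,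
        π (x ∘L ((ContinuousLinearMap.adjoint y) ∘L z)) =
          (π x) ∘L ((ContinuousLinearMap.adjoint (π y)) ∘L (π z)))) :=
  integrated_representation_of_TRO_action_general μ X hXadd hXsmul hXtro α hadd hsmul hiso htro hone
    hcont
end
end

section
/- Let G be a locally compact Hausdorff topological group with a left Haar measure, let H and K be separable complex Hilbert spaces, let X ⊆ B(H;K) be a norm-closed linear subspace closed under the ternary product (a,b,c) ↦ a b* c, and let α : G → (X → X) be a group homomorphism such that each α_g is a surjective linear isometry satisfying α_g(a b* c) = α_g(a)·α_g(b)*·α_g(c), and for each x ∈ X the map g ↦ α_g(x) is WOT-continuous. For x ∈ X let π(x) : L²(G;H) → L²(G;K) be the (unique) bounded operator with (π(x)ζ)(h) = α_{h⁻¹}(x)(ζ(h)) for almost every h, for every ζ ∈ L²(G;H). Let σ_g be the unitary on L²(G;H) given by (σ_g ζ)(h) = ζ(g⁻¹h) and τ_g the unitary on L²(G;K) given by (τ_g η)(h) = η(g⁻¹h) (unitary by left invariance of the Haar measure). Then the action is spatially implemented in this representation: π(α_g(x)) = τ_g · π(x) · σ_g* for every g ∈ G and x ∈ X. -/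
open MeasureTheory ContinuousLinearMap
open scoped InnerProductSpace

/-!
Left translation by `g` on `L²(G)` has adjoint left translation by `g⁻¹`, by left invariance of
the Haar integral. Conjugating the multiplication operator `ζ ↦ (h ↦ α_{h⁻¹}(x)(ζ h))` by left
translations replaces the symbol `h ↦ α_{h⁻¹}(x)` by `h ↦ α_{h⁻¹ g}(x) = α_{h⁻¹}(α_g x)`, which is the
symbol of `π(α_g x)`.
-/

section LeftTranslation

variable {G : Type*} [Group G] [MeasurableSpace G] [MeasurableMul G]
  {μ : Measure G} [μ.IsMulLeftInvariant] {𝕜 : Type*} [RCLike 𝕜]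
  {E F : Type*} [NormedAddCommGroup E] [InnerProductSpace 𝕜 E]
  [NormedAddCommGroup F] [InnerProductSpace 𝕜 F]

theorem adjoint_eq_of_ae_eq_leftTranslate [CompleteSpace E] {g : G}
    {S T : Lp E 2 μ →L[𝕜] Lp E 2 μ}
    (hS : ∀ ζ : Lp E 2 μ, ∀ᵐ h ∂μ, (S ζ : G → E) h = (ζ : G → E) (g⁻¹ * h))
    (hT : ∀ η : Lp E 2 μ, ∀ᵐ h ∂μ, (T η : G → E) h = (η : G → E) (g * h)) :
    adjoint S = T := by
  refine ext fun η => ext_inner_right 𝕜 fun ζ => ?_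
  rw [adjoint_inner_left, L2.inner_def, L2.inner_def]
  calc ∫ h, ⟪(η : G → E) h, (S ζ : G → E) h⟫_𝕜 ∂μ
      = ∫ h, ⟪(η : G → E) h, (ζ : G → E) (g⁻¹ * h)⟫_𝕜 ∂μ :=
        integral_congr_ae <| (hS ζ).mono fun h hh => by simp only [hh]
    _ = ∫ h, ⟪(η : G → E) (g * h), (ζ : G → E) h⟫_𝕜 ∂μ := by
        rw [← integral_mul_left_eq_self _ g]
        simp only [inv_mul_cancel_left]
    _ = ∫ h, ⟪(T η : G → E) h, (ζ : G → E) h⟫_𝕜 ∂μ :=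
        integral_congr_ae <| (hT η).mono fun h hh => by simp only [hh]

theorem eq_leftTranslate_comp_comp_leftTranslate {g : G} {a : G → E → F}
    {M N : Lp E 2 μ →L[𝕜] Lp F 2 μ} {S : Lp E 2 μ →L[𝕜] Lp E 2 μ}
    {T : Lp F 2 μ →L[𝕜] Lp F 2 μ}
    (hM : ∀ ζ : Lp E 2 μ, ∀ᵐ h ∂μ, (M ζ : G → F) h = a h ((ζ : G → E) h))
    (hN : ∀ ζ : Lp E 2 μ, ∀ᵐ h ∂μ, (N ζ : G → F) h = a (g⁻¹ * h) ((ζ : G → E) h))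
    (hS : ∀ ζ : Lp E 2 μ, ∀ᵐ h ∂μ, (S ζ : G → E) h = (ζ : G → E) (g * h))
    (hT : ∀ η : Lp F 2 μ, ∀ᵐ h ∂μ, (T η : G → F) h = (η : G → F) (g⁻¹ * h)) :
    N = T ∘L (M ∘L S) := by
  refine ext fun ζ => Lp.ext ?_
  have hM' := (eventually_mul_left_iff μ g⁻¹).2 (hM (S ζ))
  have hS' := (eventually_mul_left_iff μ g⁻¹).2 (hS ζ)
  filter_upwards [hN ζ, hT (M (S ζ)), hM', hS'] with h hNh hTh hMh hSh
  rw [comp_apply, comp_apply, hNh, hTh, hMh, hSh, mul_inv_cancel_left]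

end LeftTranslation

theorem integrated_TRO_action_spatially_implemented_general
    {G : Type*} [Group G] [TopologicalSpace G] [IsTopologicalGroup G]
    [MeasurableSpace G] [BorelSpace G]
    (μ : MeasureTheory.Measure G) [μ.IsHaarMeasure]
    {H K : Type*}
    [NormedAddCommGroup H] [InnerProductSpace ℂ H] [CompleteSpace H]
    [NormedAddCommGroup K] [InnerProductSpace ℂ K]
    (X : Set (H →L[ℂ] K))
    (α : G → (H →L[ℂ] K) → (H →L[ℂ] K))
    (hbij : ∀ g : G, Set.BijOn (α g) X X)
    (hhom : ∀ g h : G, ∀ x ∈ X, α (g * h) x = α g (α h x))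
    -- the integrated representation π
    (π : (H →L[ℂ] K) → (Lp H 2 μ →L[ℂ] Lp K 2 μ))
    (hπ : ∀ x ∈ X, ∀ ζ : Lp H 2 μ, ∀ᵐ h ∂μ, (π x ζ : G → K) h = α h⁻¹ x ((ζ : G → H) h))
    -- the left translation unitaries σ and τ
    (σ : G → (Lp H 2 μ →L[ℂ] Lp H 2 μ))
    (hσ : ∀ g : G, ∀ ζ : Lp H 2 μ, ∀ᵐ h ∂μ, (σ g ζ : G → H) h = (ζ : G → H) (g⁻¹ * h))
    (τ : G → (Lp K 2 μ →L[ℂ] Lp K 2 μ))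
    (hτ : ∀ g : G, ∀ η : Lp K 2 μ, ∀ᵐ h ∂μ, (τ g η : G → K) h = (η : G → K) (g⁻¹ * h)) :
    ∀ g : G, ∀ x ∈ X,
      π (α g x) = (τ g) ∘L ((π x) ∘L (ContinuousLinearMap.adjoint (σ g))) := by
  intro g x hx
  have hσ_inv (ζ : Lp H 2 μ) : ∀ᵐ h ∂μ, (σ g⁻¹ ζ : G → H) h = (ζ : G → H) (g * h) := by
    simpa only [inv_inv] using hσ g⁻¹ ζ
  rw [adjoint_eq_of_ae_eq_leftTranslate (hσ g) hσ_inv]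
  refine eq_leftTranslate_comp_comp_leftTranslate (hπ x hx) (fun ζ => ?_) hσ_inv (hτ g)
  filter_upwards [hπ (α g x) ((hbij g).mapsTo hx) ζ] with h hh
  rw [hh, mul_inv_rev, inv_inv, hhom _ _ _ hx]

/-- Spatial implementation of an integrated TRO action: in the regular representation `π` on the
Bochner L²-spaces, the action is implemented by the left translation unitaries:
`π(α_g(x)) = τ_g π(x) σ_g*`. -/
theorem integrated_TRO_action_spatially_implemented
    {G : Type*} [Group G] [TopologicalSpace G] [IsTopologicalGroup G]
    [LocallyCompactSpace G] [T2Space G] [MeasurableSpace G] [BorelSpace G]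
    (μ : MeasureTheory.Measure G) [μ.IsHaarMeasure]
    {H K : Type*}
    [NormedAddCommGroup H] [InnerProductSpace ℂ H] [CompleteSpace H]
    [TopologicalSpace.SeparableSpace H]
    [NormedAddCommGroup K] [InnerProductSpace ℂ K] [CompleteSpace K]
    [TopologicalSpace.SeparableSpace K]
    (X : Set (H →L[ℂ] K))
    (hX0 : (0 : H →L[ℂ] K) ∈ X)
    (hXadd : ∀ a ∈ X, ∀ b ∈ X, a + b ∈ X)
    (hXsmul : ∀ (c : ℂ), ∀ a ∈ X, c • a ∈ X)
    (hXclosed : IsClosed X)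
    (hXtro : ∀ a ∈ X, ∀ b ∈ X, ∀ c ∈ X, a ∘L ((ContinuousLinearMap.adjoint b) ∘L c) ∈ X)
    (α : G → (H →L[ℂ] K) → (H →L[ℂ] K))
    (hbij : ∀ g : G, Set.BijOn (α g) X X)
    (hadd : ∀ g : G, ∀ x ∈ X, ∀ y ∈ X, α g (x + y) = α g x + α g y)
    (hsmul : ∀ g : G, ∀ (c : ℂ), ∀ x ∈ X, α g (c • x) = c • α g x)
    (hiso : ∀ g : G, ∀ x ∈ X, ‖α g x‖ = ‖x‖)
    (htro : ∀ g : G, ∀ a ∈ X, ∀ b ∈ X, ∀ c ∈ X,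
      α g (a ∘L ((ContinuousLinearMap.adjoint b) ∘L c)) =
        (α g a) ∘L ((ContinuousLinearMap.adjoint (α g b)) ∘L (α g c)))
    (hhom : ∀ g h : G, ∀ x ∈ X, α (g * h) x = α g (α h x))
    (hone : ∀ x ∈ X, α (1 : G) x = x)
    (hcont : ∀ x ∈ X, Continuous fun g : G => ContinuousLinearMapWOT.ofCLM (α g x))
    -- the integrated representation π
    (π : (H →L[ℂ] K) → (Lp H 2 μ →L[ℂ] Lp K 2 μ))
    (hπ : ∀ x ∈ X, ∀ ζ : Lp H 2 μ, ∀ᵐ h ∂μ, (π x ζ : G → K) h = α h⁻¹ x ((ζ : G → H) h))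
    -- the left translation unitaries σ and τ
    (σ : G → (Lp H 2 μ →L[ℂ] Lp H 2 μ))
    (hσ : ∀ g : G, ∀ ζ : Lp H 2 μ, ∀ᵐ h ∂μ, (σ g ζ : G → H) h = (ζ : G → H) (g⁻¹ * h))
    (τ : G → (Lp K 2 μ →L[ℂ] Lp K 2 μ))
    (hτ : ∀ g : G, ∀ η : Lp K 2 μ, ∀ᵐ h ∂μ, (τ g η : G → K) h = (η : G → K) (g⁻¹ * h)) :
    ∀ g : G, ∀ x ∈ X,
      π (α g x) = (τ g) ∘L ((π x) ∘L (ContinuousLinearMap.adjoint (σ g))) :=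
  integrated_TRO_action_spatially_implemented_general μ X α hbij hhom π hπ σ hσ τ hτ
end
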